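/- arXiv:math/0603159 — 4 statements merged into one kernel-verified Lean document; each statement's English description precedes it below -/
import Mathlib

section
/- Let φ₁, ..., φ_n : [0,∞) → [0,∞) be measurable functions. Then ∫_0^∞ e^{-t} (∫_{0 ≤ s₁ ≤ ⋯ ≤ s_n ≤ t} ∏_{k=1}^n φ_k(s_k - s_{k-1}) ds₁ ⋯ ds_n) dt = ∏_{k=1}^n ∫_0^∞ e^{-t} φ_k(t) dt, with the convention s₀ = 0. -/
open MeasureTheory Real
open scoped ENNReal

lemma my_lintegral_exp_Ioi (a : ℝ) :
    ∫⁻ t in Set.Ioi a, ENNReal.ofReal (Real.exp (-t)) = ENNReal.ofReal (Real.exp (-a)) := by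
  rw [← ofReal_integral_eq_lintegral_ofReal]
  · rw [integral_exp_neg_Ioi]
  · have := exp_neg_integrableOn_Ioi a one_pos
    simpa [IntegrableOn] using this
  · filter_upwards with x using (exp_pos _).le

lemma my_lintegral_fin_prod {n : ℕ} (g : Fin n → ℝ → ℝ≥0∞) (hg : ∀ i, Measurable (g i)) :
    ∫⁻ u : Fin n → ℝ, ∏ i, g i (u i) = ∏ i, ∫⁻ t, g i t := by
  induction n with
  | zero => simp [MeasureTheory.volume_pi]
  | succ n ih =>
    have hmp := ((measurePreserving_piFinSuccAbove (fun _ : Fin (n+1) => (volume : Measure ℝ)) 0).symm)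
    have hmeas : Measurable fun u : Fin (n+1) → ℝ => ∏ i, g i (u i) :=
      Finset.measurable_prod _ fun i _ => (hg i).comp (measurable_pi_apply i)
    rw [MeasureTheory.volume_pi, ← hmp.lintegral_comp hmeas]
    simp_rw [MeasurableEquiv.piFinSuccAbove_symm_apply, Fin.insertNthEquiv,
      Fin.prod_univ_succ, Fin.insertNth_zero]
    simp only [Fin.zero_succAbove, Equiv.coe_fn_mk, Fin.cons_zero, Fin.cons_succ]
    simp only [cast_eq]
    have key := lintegral_prod_mul (μ := (volume : Measure ℝ))
      (ν := Measure.pi fun _ : Fin n => (volume : Measure ℝ)) (f := g 0)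
      (g := fun y => ∏ x : Fin n, g x.succ (y x)) ((hg 0).aemeasurable)
      ((Finset.measurable_prod _ fun i _ => (hg i.succ).comp (measurable_pi_apply i)).aemeasurable)
    rw [key, ← MeasureTheory.volume_pi, ih (fun i => g i.succ) (fun i => hg i.succ)]

noncomputable def cumsum (n : ℕ) : (Fin n → ℝ) →ₗ[ℝ] (Fin n → ℝ) where
  toFun u := fun k => ∑ i ∈ Finset.Iic k, u i
  map_add' u v := by funext k; simp [Finset.sum_add_distrib]
  map_smul' c u := by funext k; simp [Finset.mul_sum]

lemma cumsum_det (n : ℕ) : LinearMap.det (cumsum n) = 1 := by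
  classical
  rw [← LinearMap.det_toMatrix', ]
  have h : LinearMap.toMatrix' (cumsum n) = fun k i => if i ≤ k then (1:ℝ) else 0 := by
    ext k i
    simp [LinearMap.toMatrix', cumsum, Finset.sum_ite_eq', Finset.mem_Iic]
  rw [h]
  have : Matrix.BlockTriangular (fun k i => if i ≤ k then (1:ℝ) else 0) (OrderDual.toDual : Fin n → (Fin n)ᵒᵈ) := by
    intro i j hij
    have : i < j := hij
    simp [not_le.mpr this]
  rw [Matrix.det_of_lowerTriangular _ this]
  simp

lemma cumsum_measurePreserving (n : ℕ) :
    MeasurePreserving (cumsum n) (volume : Measure (Fin n → ℝ)) volume := by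
  refine ⟨(cumsum n).continuous_of_finiteDimensional.measurable, ?_⟩
  rw [Real.map_linearMap_volume_pi_eq_smul_volume_pi (by rw [cumsum_det]; norm_num)]
  simp [cumsum_det]
lemma Iic_eq_insert {n : ℕ} (k : Fin n) (hk : (k : ℕ) ≠ 0) :
    Finset.Iic k = insert k (Finset.Iic ⟨(k : ℕ) - 1, lt_of_le_of_lt (Nat.sub_le _ _) k.2⟩) := by
  ext i
  simp only [Finset.mem_Iic, Finset.mem_insert, Fin.le_def, Fin.ext_iff]
  omega

lemma not_mem_Iic_pred {n : ℕ} (k : Fin n) (hk : (k : ℕ) ≠ 0) :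
    k ∉ Finset.Iic ⟨(k : ℕ) - 1, lt_of_le_of_lt (Nat.sub_le _ _) k.2⟩ := by
  simp only [Finset.mem_Iic, Fin.le_def]
  omega

lemma cumsum_zero_apply {n : ℕ} (u : Fin n → ℝ) (k : Fin n) (hk : (k : ℕ) = 0) :
    cumsum n u k = u k := by
  show (∑ i ∈ Finset.Iic k, u i) = u k
  have : Finset.Iic k = {k} := by
    ext i
    simp only [Finset.mem_Iic, Finset.mem_singleton, Fin.le_def, Fin.ext_iff, hk]
    omega
  simp [this]

lemma cumsum_diff {n : ℕ} (u : Fin n → ℝ) (k : Fin n) :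
    cumsum n u k - (if (k : ℕ) = 0 then 0 else
      cumsum n u ⟨(k : ℕ) - 1, lt_of_le_of_lt (Nat.sub_le _ _) k.2⟩) = u k := by
  by_cases hk : (k : ℕ) = 0
  · rw [if_pos hk, cumsum_zero_apply u k hk, sub_zero]
  · rw [if_neg hk]
    show (∑ i ∈ Finset.Iic k, u i) - (∑ i ∈ Finset.Iic (⟨(k:ℕ)-1, lt_of_le_of_lt (Nat.sub_le _ _) k.2⟩ : Fin n), u i) = u k
    rw [Iic_eq_insert k hk, Finset.sum_insert (not_mem_Iic_pred k hk)]
    ring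

lemma cumsum_nonneg_iff {n : ℕ} (u : Fin n → ℝ) :
    ((∀ i j : Fin n, i ≤ j → cumsum n u i ≤ cumsum n u j) ∧ ∀ i, 0 ≤ cumsum n u i)
      ↔ ∀ i, 0 ≤ u i := by
  constructor
  · rintro ⟨hmono, hpos⟩ i
    by_cases hi : (i : ℕ) = 0
    · rw [← cumsum_zero_apply u i hi]; exact hpos i
    · have h := cumsum_diff u i
      rw [if_neg hi] at h
      have hle : (⟨(i : ℕ) - 1, lt_of_le_of_lt (Nat.sub_le _ _) i.2⟩ : Fin n) ≤ i := by
        simp only [Fin.le_def]; omega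
      linarith [hmono _ _ hle]
  · intro hu
    constructor
    · intro i j hij
      show (∑ i ∈ Finset.Iic i, u i) ≤ ∑ i ∈ Finset.Iic j, u i
      exact Finset.sum_le_sum_of_subset_of_nonneg (Finset.Iic_subset_Iic.mpr hij)
        (fun i _ _ => hu i)
    · intro i
      show 0 ≤ ∑ j ∈ Finset.Iic i, u j
      exact Finset.sum_nonneg fun j _ => hu j

lemma cumsum_last {m : ℕ} (u : Fin (m+1) → ℝ) :
    cumsum (m+1) u (Fin.last m) = ∑ i, u i := by
  show (∑ i ∈ Finset.Iic (Fin.last m), u i) = ∑ i, u i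
  congr 1
  ext i
  simp [Fin.le_last]


theorem stmt3 (n : ℕ) (hn : 0 < n) (φ : Fin n → ℝ → ℝ≥0∞) (hφ : ∀ k, Measurable (φ k)) :
    (∫⁻ t in Set.Ioi (0 : ℝ), ENNReal.ofReal (Real.exp (-t)) *
      ∫⁻ s in {s : Fin n → ℝ | (∀ i j : Fin n, i ≤ j → s i ≤ s j) ∧
          (∀ i, 0 ≤ s i) ∧ ∀ i, s i ≤ t},
        ∏ k : Fin n, φ k (s k -
          if (k : ℕ) = 0 then 0 else s ⟨(k : ℕ) - 1, lt_of_le_of_lt (Nat.sub_le _ _) k.2⟩))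
      = ∏ k : Fin n, ∫⁻ t in Set.Ioi (0 : ℝ), ENNReal.ofReal (Real.exp (-t)) * φ k t := by
  obtain ⟨m, rfl⟩ := Nat.exists_eq_succ_of_ne_zero hn.ne'
  set n := m + 1 with hnm
  set e : ℝ → ℝ≥0∞ := fun t => ENNReal.ofReal (Real.exp (-t)) with he
  set Φ : (Fin n → ℝ) → ℝ≥0∞ := fun s => ∏ k : Fin n, φ k (s k -
      if (k : ℕ) = 0 then 0 else s ⟨(k : ℕ) - 1, lt_of_le_of_lt (Nat.sub_le _ _) k.2⟩) with hΦdef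
  set A : Set (Fin n → ℝ) := {s | (∀ i j : Fin n, i ≤ j → s i ≤ s j) ∧ ∀ i, 0 ≤ s i} with hAdef
  set W : Set (ℝ × (Fin n → ℝ)) := {p | 0 < p.1 ∧ p.2 ∈ A ∧ ∀ i, p.2 i ≤ p.1} with hWdef
  have he_meas : Measurable e := by
    exact (measurable_id.neg.exp).ennreal_ofReal
  have hΦ : Measurable Φ := by
    apply Finset.measurable_prod
    intro k _
    apply (hφ k).comp
    apply Measurable.sub (measurable_pi_apply k)
    split_ifs
    · exact measurable_const
    · exact measurable_pi_apply _
  have hmono_meas : MeasurableSet {s : Fin n → ℝ | ∀ i j : Fin n, i ≤ j → s i ≤ s j} := by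
    rw [Set.setOf_forall]
    refine MeasurableSet.iInter fun i => ?_
    rw [Set.setOf_forall]
    refine MeasurableSet.iInter fun j => ?_
    by_cases hij : i ≤ j
    · simp only [hij, true_implies]
      exact measurableSet_le (measurable_pi_apply i) (measurable_pi_apply j)
    · simp only [hij, false_implies, Set.setOf_true]
      exact MeasurableSet.univ
  have hA : MeasurableSet A := by
    rw [show A = {s : Fin n → ℝ | ∀ i j : Fin n, i ≤ j → s i ≤ s j} ∩
        {s : Fin n → ℝ | ∀ i, 0 ≤ s i} from rfl]
    refine hmono_meas.inter ?_
    rw [Set.setOf_forall]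
    exact MeasurableSet.iInter fun i =>
      measurableSet_le measurable_const (measurable_pi_apply i)
  have hW : MeasurableSet W := by
    rw [show W = {p : ℝ × (Fin n → ℝ) | 0 < p.1} ∩ (Prod.snd ⁻¹' A) ∩
        {p : ℝ × (Fin n → ℝ) | ∀ i, p.2 i ≤ p.1} from by ext p; simp [hWdef, and_assoc]]
    refine ((measurableSet_lt measurable_const measurable_fst).inter
      (hA.preimage measurable_snd)).inter ?_
    rw [Set.setOf_forall]
    exact MeasurableSet.iInter fun i =>
      measurableSet_le (measurable_snd.eval) measurable_fst
  have hSt : ∀ t : ℝ, MeasurableSet {s : Fin n → ℝ | (∀ i j : Fin n, i ≤ j → s i ≤ s j) ∧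
      (∀ i, 0 ≤ s i) ∧ ∀ i, s i ≤ t} := by
    intro t
    rw [show {s : Fin n → ℝ | (∀ i j : Fin n, i ≤ j → s i ≤ s j) ∧
        (∀ i, 0 ≤ s i) ∧ ∀ i, s i ≤ t} = A ∩ {s : Fin n → ℝ | ∀ i, s i ≤ t} from by
      ext s; simp [hAdef, and_assoc]]
    refine hA.inter ?_
    rw [Set.setOf_forall]
    exact MeasurableSet.iInter fun i =>
      measurableSet_le (measurable_pi_apply i) measurable_const
  calc
    (∫⁻ t in Set.Ioi (0 : ℝ), e t *
      ∫⁻ s in {s : Fin n → ℝ | (∀ i j : Fin n, i ≤ j → s i ≤ s j) ∧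
          (∀ i, 0 ≤ s i) ∧ ∀ i, s i ≤ t}, Φ s)
        = ∫⁻ t : ℝ, ∫⁻ s : Fin n → ℝ, W.indicator (fun p => e p.1 * Φ p.2) (t, s) := by
      rw [← lintegral_indicator measurableSet_Ioi]
      refine lintegral_congr fun t => ?_
      by_cases ht : t ∈ Set.Ioi (0:ℝ)
      · rw [Set.indicator_of_mem ht, ← lintegral_indicator (hSt t),
          ← lintegral_const_mul (e t) (hΦ.indicator (hSt t))]
        refine lintegral_congr fun s => ?_
        by_cases hs : s ∈ {s : Fin n → ℝ | (∀ i j : Fin n, i ≤ j → s i ≤ s j) ∧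
            (∀ i, 0 ≤ s i) ∧ ∀ i, s i ≤ t}
        · rw [Set.indicator_of_mem hs, Set.indicator_of_mem]
          exact ⟨ht, ⟨hs.1, hs.2.1⟩, hs.2.2⟩
        · rw [Set.indicator_of_notMem hs, Set.indicator_of_notMem, mul_zero]
          intro hmem
          exact hs ⟨hmem.2.1.1, hmem.2.1.2, hmem.2.2⟩
      · rw [Set.indicator_of_notMem ht]
        symm
        rw [← lintegral_zero]
        refine lintegral_congr fun s => ?_
        rw [Set.indicator_of_notMem]
        intro hmem
        exact ht hmem.1
    _ = ∫⁻ s : Fin n → ℝ, ∫⁻ t : ℝ, W.indicator (fun p => e p.1 * Φ p.2) (t, s) := by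
      exact lintegral_lintegral_swap
        (((he_meas.comp measurable_fst).mul (hΦ.comp measurable_snd)).indicator hW).aemeasurable
    _ = ∫⁻ s : Fin n → ℝ, A.indicator (fun s => e (s (Fin.last m)) * Φ s) s := by
      refine lintegral_congr fun s => ?_
      by_cases hs : s ∈ A
      · rw [Set.indicator_of_mem hs]
        obtain ⟨hmono, hpos⟩ := hs
        have hTset : ∀ t : ℝ, W.indicator (fun p => e p.1 * Φ p.2) (t, s) =
            ({t : ℝ | 0 < t ∧ ∀ i, s i ≤ t}).indicator (fun t => e t * Φ s) t := by
          intro t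
          by_cases hts : t ∈ {t : ℝ | 0 < t ∧ ∀ i, s i ≤ t}
          · rw [Set.indicator_of_mem hts, Set.indicator_of_mem]
            exact ⟨hts.1, ⟨hmono, hpos⟩, hts.2⟩

          · rw [Set.indicator_of_notMem hts, Set.indicator_of_notMem]
            intro hmem
            exact hts ⟨hmem.1, hmem.2.2⟩
        simp_rw [hTset]
        have hTmeas : MeasurableSet {t : ℝ | 0 < t ∧ ∀ i, s i ≤ t} := by
          rw [show {t : ℝ | 0 < t ∧ ∀ i, s i ≤ t} =
              Set.Ioi 0 ∩ ⋂ i, Set.Ici (s i) from by ext t; simp [Set.mem_iInter]]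
          exact measurableSet_Ioi.inter (MeasurableSet.iInter fun i => measurableSet_Ici)
        rw [lintegral_indicator hTmeas, lintegral_mul_const _ he_meas]
        have haeeq : {t : ℝ | 0 < t ∧ ∀ i, s i ≤ t} =ᵐ[volume] Set.Ioi (s (Fin.last m)) := by
          rw [Filter.eventuallyEq_set]
          have hsub1 : Set.Ioi (s (Fin.last m)) ⊆ {t : ℝ | 0 < t ∧ ∀ i, s i ≤ t} := by
            intro t ht
            exact ⟨lt_of_le_of_lt (hpos _) ht, fun i => (hmono i (Fin.last m) (Fin.le_last i)).trans ht.le⟩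
          have hsub2 : {t : ℝ | 0 < t ∧ ∀ i, s i ≤ t} ⊆ Set.Ici (s (Fin.last m)) := by
            intro t ht
            exact ht.2 (Fin.last m)
          have hnull : volume ({s (Fin.last m)} : Set ℝ) = 0 := Real.volume_singleton
          have : ∀ᵐ t : ℝ, t ≠ s (Fin.last m) := by
            rw [MeasureTheory.ae_iff]
            simpa using hnull
          filter_upwards [this] with t htne
          constructor
          · intro h
            rcases lt_or_eq_of_le (Set.mem_Ici.mp (hsub2 h)) with h' | h'
            · exact h'
            · exact absurd h'.symm htne
          · intro h
            exact hsub1 h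
        rw [setLIntegral_congr haeeq, my_lintegral_exp_Ioi]
      · rw [Set.indicator_of_notMem hs, ← lintegral_zero]
        refine lintegral_congr fun t => ?_
        rw [Set.indicator_of_notMem]
        intro hmem
        exact hs hmem.2.1
    _ = ∫⁻ u : Fin n → ℝ, A.indicator (fun s => e (s (Fin.last m)) * Φ s) (cumsum n u) := by
      exact ((cumsum_measurePreserving n).lintegral_comp
        (((he_meas.comp (measurable_pi_apply (Fin.last m))).mul hΦ).indicator hA)).symm
    _ = ∫⁻ u : Fin n → ℝ, ∏ k : Fin n, (Set.Ici (0:ℝ)).indicator (fun t => e t * φ k t) (u k) := by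
      refine lintegral_congr fun u => ?_
      by_cases hu : ∀ i, 0 ≤ u i
      · have hmem : cumsum n u ∈ A := by
          have := (cumsum_nonneg_iff u).mpr hu
          exact ⟨this.1, this.2⟩
        rw [Set.indicator_of_mem hmem]
        have h1 : Φ (cumsum n u) = ∏ k : Fin n, φ k (u k) := by
          rw [hΦdef]
          exact Finset.prod_congr rfl fun k _ => by rw [cumsum_diff]
        have h2 : e (cumsum n u (Fin.last m)) = ∏ k : Fin n, e (u k) := by
          rw [he]
          simp only [show (cumsum n) u (Fin.last m) = ∑ i, u i from cumsum_last u]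
          rw [← Finset.sum_neg_distrib, Real.exp_sum,
            ENNReal.ofReal_prod_of_nonneg (fun i _ => (Real.exp_pos _).le)]
        rw [h1, h2, ← Finset.prod_mul_distrib]
        refine (Finset.prod_congr rfl fun k _ => ?_).symm
        rw [Set.indicator_of_mem (show u k ∈ Set.Ici (0:ℝ) from hu k)]
      · push_neg at hu
        obtain ⟨i, hi⟩ := hu
        have hnot : cumsum n u ∉ A := by
          intro hmem
          have := (cumsum_nonneg_iff u).mp ⟨hmem.1, hmem.2⟩
          exact absurd (this i) (not_le.mpr hi)
        rw [Set.indicator_of_notMem hnot]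
        symm
        apply Finset.prod_eq_zero (Finset.mem_univ i)
        rw [Set.indicator_of_notMem (show u i ∉ Set.Ici (0:ℝ) from not_le.mpr hi)]
    _ = ∏ k : Fin n, ∫⁻ t : ℝ, (Set.Ici (0:ℝ)).indicator (fun t => e t * φ k t) t := by
      exact my_lintegral_fin_prod _ fun k =>
        ((he_meas.mul (hφ k)).indicator measurableSet_Ici)
    _ = ∏ k : Fin n, ∫⁻ t in Set.Ioi (0:ℝ), e t * φ k t := by
      refine Finset.prod_congr rfl fun k _ => ?_
      rw [lintegral_indicator measurableSet_Ici]
      exact (setLIntegral_congr (Ioi_ae_eq_Ici (a := (0:ℝ)))).symm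
end

section
/- Let Q : ℝ^d → [0,∞) be measurable and let p ≥ 1, n ≥ 1 be integers. Then ∫_{(ℝ^d)^n} [∑_{σ ∈ Σ_n} ∏_{k=1}^n Q(∑_{j=1}^k λ_{σ(j)})]^p dλ₁ ⋯ dλ_n ≤ (n!)^p (∫_{ℝ^d} Q^p(λ) dλ)^n, where Σ_n is the symmetric group on {1,...,n}. -/
/-!
By the power-mean inequality, `(∑_σ a_σ)^p ≤ (n!)^(p-1) ∑_σ a_σ^p`, so it suffices to integrate
each permutation term `∏_k Q^p(λ_σ(1) + ⋯ + λ_σ(k))`. Relabelling the variables removes `σ`, and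
integrating out `λ_1` first, translation invariance of Lebesgue measure turns the remaining
`n - 1` partial sums into an instance of the same integral, so by induction each term integrates
to `(∫ Q^p)^n`.

The argument runs in `ℝ≥0∞`, where nothing can fail to be integrable. Back in `ℝ`, a
non-integrable `Q^p` makes the right-hand side `0`; the identity permutation alone bounds the
left-hand integral below by `(∫⁻ Q^p)^n = ∞`, so the left-hand side is `0` as well.
-/

open MeasureTheory Finset
open scoped ENNReal

namespace ENNReal

theorem pow_sum_le_card_pow_mul_sum_pow {ι : Type*} (s : Finset ι) (f : ι → ℝ≥0∞) {p : ℕ}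
    (hp : 1 ≤ p) : (∑ i ∈ s, f i) ^ p ≤ (#s : ℝ≥0∞) ^ (p - 1) * ∑ i ∈ s, f i ^ p := by
  have h := rpow_sum_le_const_mul_sum_rpow s f (p := p) (by exact_mod_cast hp)
  rw [← Nat.cast_one, ← Nat.cast_sub hp] at h
  simpa only [rpow_natCast] using h

theorem toReal_le_toReal_mul_toReal_pow {a b c : ℝ≥0∞} {n : ℕ} (hn : n ≠ 0) (hc : c ≠ ∞)
    (hba : b ^ n ≤ a) (hab : a ≤ c * b ^ n) : a.toReal ≤ c.toReal * b.toReal ^ n := by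
  obtain rfl | hb := eq_or_ne b ∞
  · have : a = ∞ := by simpa [hn] using hba
    simp [this, hn]
  · simpa only [toReal_mul, toReal_pow] using toReal_mono (mul_ne_top hc (pow_ne_top hb)) hab

end ENNReal

theorem Fin.sum_Iic_succ_cons {M : Type*} [AddCommMonoid M] {n : ℕ} (x : M) (y : Fin n → M)
    (k : Fin n) : ∑ j ∈ Iic k.succ, (Fin.cons x y : Fin (n + 1) → M) j = x + ∑ j ∈ Iic k, y j := by
  rw [Iic_eq_Icc, ← Ioc_insert_left bot_le, sum_insert left_notMem_Ioc, bot_eq_zero,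
    ← map_succEmb_Iic, sum_map]
  simp

theorem ofReal_sum_perm_prod_partialSum_pow {E : Type*} [AddCommMonoid E] {n : ℕ} {Q : E → ℝ}
    (hQ0 : ∀ x, 0 ≤ Q x) (l : Fin n → E) (p : ℕ) :
    ENNReal.ofReal ((∑ σ : Equiv.Perm (Fin n), ∏ k, Q (∑ j ∈ Iic k, l (σ j))) ^ p) =
      (∑ σ : Equiv.Perm (Fin n), ∏ k, ENNReal.ofReal (Q (∑ j ∈ Iic k, l (σ j)))) ^ p := by
  have h_term (σ : Equiv.Perm (Fin n)) : 0 ≤ ∏ k, Q (∑ j ∈ Iic k, l (σ j)) :=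
    prod_nonneg fun _ _ ↦ hQ0 _
  rw [ENNReal.ofReal_pow (sum_nonneg fun σ _ ↦ h_term σ),
    ENNReal.ofReal_sum_of_nonneg fun σ _ ↦ h_term σ]
  simp_rw [ENNReal.ofReal_prod_of_nonneg fun _ _ ↦ hQ0 _]

section

variable {E : Type*} [MeasurableSpace E]

theorem lintegral_pi_fin_succ {n : ℕ} (μ : Fin (n + 1) → Measure E) [∀ i, SigmaFinite (μ i)]
    {F : (Fin (n + 1) → E) → ℝ≥0∞} (hF : Measurable F) :
    ∫⁻ l, F l ∂Measure.pi μ = ∫⁻ x, ∫⁻ y, F (Fin.cons x y) ∂Measure.pi (fun i ↦ μ i.succ) ∂μ 0 := by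
  rw [← ((measurePreserving_piFinSuccAbove μ 0).symm).lintegral_comp hF,
    lintegral_prod (fun a ↦ F ((MeasurableEquiv.piFinSuccAbove (fun _ ↦ E) 0).symm a))
      (hF.comp (MeasurableEquiv.measurable _)).aemeasurable]
  simp [MeasurableEquiv.piFinSuccAbove_symm_apply, Fin.insertNthEquiv, Fin.insertNth_zero']

variable (μ : Measure E) [SigmaFinite μ]

theorem lintegral_pi_comp_perm {ι : Type*} [Fintype ι] (σ : Equiv.Perm ι)
    (F : (ι → E) → ℝ≥0∞) :
    ∫⁻ l, F (l ∘ σ) ∂Measure.pi (fun _ ↦ μ) = ∫⁻ l, F l ∂Measure.pi (fun _ ↦ μ) :=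
  (measurePreserving_arrowCongr' (fun _ ↦ μ) (fun _ ↦ μ) σ.symm (MeasurableEquiv.refl E)
    (fun _ ↦ MeasurePreserving.id μ)).lintegral_comp_emb (MeasurableEquiv.measurableEmbedding _) F

variable [AddCommGroup E] [MeasurableAdd₂ E] [μ.IsAddLeftInvariant]

theorem lintegral_pi_prod_partialSum {g : E → ℝ≥0∞} (hg : Measurable g) (n : ℕ) :
    ∫⁻ l, ∏ k : Fin n, g (∑ j ∈ Iic k, l j) ∂Measure.pi (fun _ ↦ μ) = (∫⁻ x, g x ∂μ) ^ n := by
  induction n generalizing g with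
  | zero => simp
  | succ n ih =>
    have h_inner (x : E) :
        ∫⁻ y, g x * ∏ k : Fin n, g (x + ∑ j ∈ Iic k, y j) ∂Measure.pi (fun _ ↦ μ) =
          g x * (∫⁻ x, g x ∂μ) ^ n := by
      rw [lintegral_const_mul _ (by fun_prop), ih (g := fun y ↦ g (x + y)) (by fun_prop),
        lintegral_add_left_eq_self g x]
    rw [lintegral_pi_fin_succ (fun _ ↦ μ) (by fun_prop)]
    simp only [Fin.prod_univ_succ, show Iic (0 : Fin (n + 1)) = {0} from Iic_bot, sum_singleton,
      Fin.cons_zero, Fin.sum_Iic_succ_cons]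
    simp_rw [h_inner]
    rw [lintegral_mul_const _ hg, pow_succ']

theorem lintegral_pi_prod_partialSum_perm {g : E → ℝ≥0∞} (hg : Measurable g) {n : ℕ}
    (σ : Equiv.Perm (Fin n)) :
    ∫⁻ l, ∏ k : Fin n, g (∑ j ∈ Iic k, l (σ j)) ∂Measure.pi (fun _ ↦ μ) = (∫⁻ x, g x ∂μ) ^ n :=
  (lintegral_pi_comp_perm μ σ fun l ↦ ∏ k : Fin n, g (∑ j ∈ Iic k, l j)).trans
    (lintegral_pi_prod_partialSum μ hg n)

open Nat in
theorem lintegral_pi_sum_perm_prod_partialSum_pow_le {g : E → ℝ≥0∞} (hg : Measurable g)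
    {n p : ℕ} (hp : 1 ≤ p) :
    ∫⁻ l, (∑ σ : Equiv.Perm (Fin n), ∏ k, g (∑ j ∈ Iic k, l (σ j))) ^ p ∂Measure.pi (fun _ ↦ μ)
      ≤ (n ! : ℝ≥0∞) ^ p * (∫⁻ x, g x ^ p ∂μ) ^ n := by
  have h_card : (#(univ : Finset (Equiv.Perm (Fin n))) : ℝ≥0∞) = n ! := by simp [Fintype.card_perm]
  calc _ ≤ ∫⁻ l, (n ! : ℝ≥0∞) ^ (p - 1) *
          ∑ σ : Equiv.Perm (Fin n), ∏ k, g (∑ j ∈ Iic k, l (σ j)) ^ p ∂Measure.pi (fun _ ↦ μ) :=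
        lintegral_mono fun l ↦ by
          simpa only [h_card, prod_pow] using ENNReal.pow_sum_le_card_pow_mul_sum_pow univ
            (fun σ : Equiv.Perm (Fin n) ↦ ∏ k, g (∑ j ∈ Iic k, l (σ j))) hp
    _ = (n ! : ℝ≥0∞) ^ (p - 1) * ∑ _σ : Equiv.Perm (Fin n), (∫⁻ x, g x ^ p ∂μ) ^ n := by
        rw [lintegral_const_mul _ (by fun_prop), lintegral_finsetSum _ fun _ _ ↦ by fun_prop]
        simp_rw [lintegral_pi_prod_partialSum_perm μ (hg.pow_const p)]
    _ = (n ! : ℝ≥0∞) ^ p * (∫⁻ x, g x ^ p ∂μ) ^ n := by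
        rw [sum_const, nsmul_eq_mul, h_card, ← mul_assoc, ← pow_succ, Nat.sub_add_cancel hp]

theorem le_lintegral_pi_sum_perm_prod_partialSum_pow {g : E → ℝ≥0∞}
    (hg : Measurable g) (n p : ℕ) :
    (∫⁻ x, g x ^ p ∂μ) ^ n ≤
      ∫⁻ l, (∑ σ : Equiv.Perm (Fin n), ∏ k, g (∑ j ∈ Iic k, l (σ j))) ^ p
        ∂Measure.pi (fun _ ↦ μ) := by
  rw [← lintegral_pi_prod_partialSum μ (hg.pow_const p)]
  refine lintegral_mono fun l ↦ ?_
  rw [prod_pow]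
  gcongr
  exact single_le_sum (f := fun σ : Equiv.Perm (Fin n) ↦ ∏ k, g (∑ j ∈ Iic k, l (σ j)))
    (fun _ _ ↦ zero_le) (mem_univ 1)

end

theorem stmt4_general (d p n : ℕ) (hp : 1 ≤ p) (hn : 1 ≤ n)
    (Q : EuclideanSpace ℝ (Fin d) → ℝ) (hQm : Measurable Q) (hQ0 : ∀ l, 0 ≤ Q l) :
    (∫ l : Fin n → EuclideanSpace ℝ (Fin d),
        (∑ σ : Equiv.Perm (Fin n), ∏ k : Fin n, Q (∑ j ∈ Finset.Iic k, l (σ j))) ^ p)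
      ≤ (n.factorial : ℝ) ^ p * (∫ u, Q u ^ p) ^ n := by
  rw [integral_eq_lintegral_of_nonneg_ae
      (.of_forall fun _ ↦ pow_nonneg (sum_nonneg fun _ _ ↦ prod_nonneg fun _ _ ↦ hQ0 _) p)
      (Measurable.aestronglyMeasurable (by fun_prop)),
    integral_eq_lintegral_of_nonneg_ae (.of_forall fun u ↦ pow_nonneg (hQ0 u) p)
      (Measurable.aestronglyMeasurable (by fun_prop)),
    ← ENNReal.toReal_natCast, ← ENNReal.toReal_pow]
  simp_rw [ofReal_sum_perm_prod_partialSum_pow hQ0, ENNReal.ofReal_pow (hQ0 _)]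
  exact ENNReal.toReal_le_toReal_mul_toReal_pow (by omega) (by simp)
    (le_lintegral_pi_sum_perm_prod_partialSum_pow volume hQm.ennreal_ofReal n p)
    (lintegral_pi_sum_perm_prod_partialSum_pow_le volume hQm.ennreal_ofReal hp)

theorem stmt4 (d p n : ℕ) (hd : 0 < d) (hp : 1 ≤ p) (hn : 1 ≤ n)
    (Q : EuclideanSpace ℝ (Fin d) → ℝ) (hQm : Measurable Q) (hQ0 : ∀ l, 0 ≤ Q l) :
    (∫ l : Fin n → EuclideanSpace ℝ (Fin d),
        (∑ σ : Equiv.Perm (Fin n), ∏ k : Fin n, Q (∑ j ∈ Finset.Iic k, l (σ j))) ^ p)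
      ≤ (n.factorial : ℝ) ^ p * (∫ u, Q u ^ p) ^ n :=
  stmt4_general d p n hp hn Q hQm hQ0
end

section
/- Let Q : ℝ^d → [0,1] be measurable with ∫ Q^p < ∞ for an integer p ≥ 1, and define the operator T on L²(ℝ^d) by (Tg)(λ) = √(Q(λ)) ∫_{ℝ^d} f(γ−λ) √(Q(γ)) g(γ) dγ, where f ≥ 0 is continuous with f(−λ)=f(λ) and ‖f‖_q = 1 for q the conjugate exponent of p. Then for all g, h ∈ L²(ℝ^d), ⟨h, Tg⟩ ≤ ‖Q‖_p ‖g‖₂ ‖h‖₂; in particular T is a bounded self-adjoint operator on L²(ℝ^d). -/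
/-!
Put `H = |h| √Q` and `K = |g| √Q`. The substitution `γ = l + u` turns the double integral of
`H l f(γ - l) K γ` into `∫ f(u) C(u) du` with `C(u) = ∫ H(l) K(l + u) dl`, so Hölder bounds it
by `‖f‖_q ‖C‖_p`. Cauchy–Schwarz in `l`, pairing `|h(l)|` with `√Q(l + u)` and `√Q(l)` with
`|g(l + u)|`, gives `C(u) ≤ A(u)^(1/2) B(u)^(1/2)` with `A(u) = ∫ Q(l + u) h(l)² dl` and
`B(u) = ∫ Q(l) g(l + u)² dl`. A second Cauchy–Schwarz in `u` and the bound
`∫ (∫ ρ(l + u) w(l) dl)^p du ≤ ‖ρ‖_p^p ‖w‖_1^p` (Hölder against the weight `w`, then Tonelli)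
yield `‖C‖_p ≤ ‖Q‖_p ‖h‖_2 ‖g‖_2`. Carried out for `ℝ≥0∞`-valued integrands, this also shows
that the integrand is integrable on the product, so Fubini and the evenness of `f` give the
symmetry.
-/

open MeasureTheory
open scoped ENNReal

section Lintegral
variable {α : Type*} [MeasurableSpace α] {ν : Measure α}

theorem lintegral_mul_le_sqrt_mul_sqrt {f g : α → ℝ≥0∞} (hf : AEMeasurable f ν)
    (hg : AEMeasurable g ν) :
    ∫⁻ x, f x * g x ∂ν ≤ (∫⁻ x, f x ^ 2 ∂ν) ^ (1 / 2 : ℝ) * (∫⁻ x, g x ^ 2 ∂ν) ^ (1 / 2 : ℝ) := by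
  simpa using ENNReal.lintegral_mul_le_Lp_mul_Lq ν Real.HolderConjugate.two_two hf hg

theorem lintegral_rpow_le_of_le_sqrt_mul_sqrt {P : ℝ} (hP : 0 ≤ P) {F A B : α → ℝ≥0∞}
    (hA : AEMeasurable A ν) (hB : AEMeasurable B ν)
    (hF : ∀ x, F x ≤ A x ^ (1 / 2 : ℝ) * B x ^ (1 / 2 : ℝ)) :
    ∫⁻ x, F x ^ P ∂ν ≤ (∫⁻ x, A x ^ P ∂ν) ^ (1 / 2 : ℝ) * (∫⁻ x, B x ^ P ∂ν) ^ (1 / 2 : ℝ) := by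
  refine (lintegral_mono fun x => ?_).trans (ENNReal.lintegral_mul_norm_pow_le
    (hA.pow_const P) (hB.pow_const P) (by norm_num) (by norm_num) (by norm_num))
  calc F x ^ P ≤ (A x ^ (1 / 2 : ℝ) * B x ^ (1 / 2 : ℝ)) ^ P := ENNReal.rpow_le_rpow (hF x) hP
    _ = (A x ^ P) ^ (1 / 2 : ℝ) * (B x ^ P) ^ (1 / 2 : ℝ) := by
      rw [ENNReal.mul_rpow_of_nonneg _ _ hP, ← ENNReal.rpow_mul, ← ENNReal.rpow_mul,
        ← ENNReal.rpow_mul, ← ENNReal.rpow_mul, mul_comm P]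

theorem lintegral_enorm_eq_ofReal_integral {u : α → ℝ} (hu : Integrable u ν) (hu0 : ∀ x, 0 ≤ u x) :
    ∫⁻ x, ‖u x‖ₑ ∂ν = ENNReal.ofReal (∫ x, u x ∂ν) := by
  rw [lintegral_enorm_of_nonneg hu0, ofReal_integral_eq_lintegral_ofReal hu (ae_of_all _ hu0)]

theorem lintegral_enorm_rpow_eq_ofReal_integral {u : α → ℝ} (hu0 : ∀ x, 0 ≤ u x) {r : ℝ}
    (hr : 0 ≤ r) (hu : Integrable (fun x => u x ^ r) ν) :
    ∫⁻ x, ‖u x‖ₑ ^ r ∂ν = ENNReal.ofReal (∫ x, u x ^ r ∂ν) := by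
  simp_rw [← Real.enorm_rpow_of_nonneg (hu0 _) hr]
  exact lintegral_enorm_eq_ofReal_integral hu fun x => Real.rpow_nonneg (hu0 x) r

theorem lintegral_enorm_sq_eq_ofReal_integral {u : α → ℝ} (hu : MemLp u 2 ν) :
    ∫⁻ x, ‖u x‖ₑ ^ 2 ∂ν = ENNReal.ofReal (∫ x, u x ^ 2 ∂ν) := by
  simp_rw [← enorm_pow]
  exact lintegral_enorm_eq_ofReal_integral hu.integrable_sq fun x => sq_nonneg (u x)

theorem integral_le_of_lintegral_enorm_le {u : α → ℝ} {B : ℝ} (hB : 0 ≤ B)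
    (hu : ∫⁻ x, ‖u x‖ₑ ∂ν ≤ ENNReal.ofReal B) : ∫ x, u x ∂ν ≤ B :=
  (ENNReal.ofReal_le_ofReal_iff hB).1 <|
    (Real.ofReal_le_enorm _).trans <| (enorm_integral_le_lintegral_enorm u).trans hu

end Lintegral

section Translation
variable {G : Type*} [MeasurableSpace G] [AddCommGroup G] [MeasurableAdd₂ G]
  {μ : Measure G} [SFinite μ] [μ.IsAddLeftInvariant]

theorem lintegral_rpow_lintegral_add_mul_le {P : ℝ} (hP : 1 ≤ P) {ρ w : G → ℝ≥0∞}
    (hρ : Measurable ρ) (hw : Measurable w) :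
    ∫⁻ u, (∫⁻ l, ρ (l + u) * w l ∂μ) ^ P ∂μ ≤ (∫⁻ x, ρ x ^ P ∂μ) * (∫⁻ l, w l ∂μ) ^ P := by
  have hP0 : 0 < P := zero_lt_one.trans_le hP
  have hexp : 0 ≤ 1 - 1 / P := by
    rw [sub_nonneg, div_le_one hP0]; exact hP
  have hρP : Measurable fun z : G × G => ρ (z.2 + z.1) ^ P * w z.2 := by fun_prop
  have holder (u : G) : (∫⁻ l, ρ (l + u) * w l ∂μ) ^ P
      ≤ (∫⁻ l, ρ (l + u) ^ P * w l ∂μ) * (∫⁻ l, w l ∂μ) ^ (P - 1) := by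
    have H := ENNReal.lintegral_mul_norm_pow_le (μ := μ)
      (f := fun l => ρ (l + u) ^ P * w l) (by fun_prop) hw.aemeasurable
      (one_div_nonneg.2 hP0.le) hexp (add_sub_cancel _ _)
    have hsplit (l : G) :
        (ρ (l + u) ^ P * w l) ^ (1 / P) * w l ^ (1 - 1 / P) = ρ (l + u) * w l := by
      rw [ENNReal.mul_rpow_of_nonneg _ _ (one_div_nonneg.2 hP0.le), ← ENNReal.rpow_mul,
        mul_one_div_cancel hP0.ne', ENNReal.rpow_one, mul_assoc,
        ← ENNReal.rpow_add_of_nonneg _ _ (one_div_nonneg.2 hP0.le) hexp, add_sub_cancel,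
        ENNReal.rpow_one]
    simp only [hsplit] at H
    calc (∫⁻ l, ρ (l + u) * w l ∂μ) ^ P
        ≤ ((∫⁻ l, ρ (l + u) ^ P * w l ∂μ) ^ (1 / P) * (∫⁻ l, w l ∂μ) ^ (1 - 1 / P)) ^ P :=
          ENNReal.rpow_le_rpow H hP0.le
      _ = _ := by
        rw [ENNReal.mul_rpow_of_nonneg _ _ hP0.le, ← ENNReal.rpow_mul, ← ENNReal.rpow_mul,
          one_div_mul_cancel hP0.ne', ENNReal.rpow_one, sub_mul, one_div_mul_cancel hP0.ne',
          one_mul]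
  calc ∫⁻ u, (∫⁻ l, ρ (l + u) * w l ∂μ) ^ P ∂μ
      ≤ ∫⁻ u, (∫⁻ l, ρ (l + u) ^ P * w l ∂μ) * (∫⁻ l, w l ∂μ) ^ (P - 1) ∂μ :=
        lintegral_mono holder
    _ = (∫⁻ l, (∫⁻ u, ρ (l + u) ^ P ∂μ) * w l ∂μ) * (∫⁻ l, w l ∂μ) ^ (P - 1) := by
        rw [lintegral_mul_const'' _ hρP.lintegral_prod_right'.aemeasurable,
          lintegral_lintegral_swap hρP.aemeasurable]
        refine congrArg (· * _) (lintegral_congr fun l => ?_)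
        exact lintegral_mul_const (μ := μ) (w l)
          (by fun_prop : Measurable fun u => ρ (l + u) ^ P)
    _ = (∫⁻ x, ρ x ^ P ∂μ) * (∫⁻ l, w l ∂μ) ^ P := by
        simp_rw [lintegral_add_left_eq_self (fun x => ρ x ^ P)]
        rw [lintegral_const_mul _ hw, mul_assoc]
        nth_rw 1 [← ENNReal.rpow_one (∫⁻ l, w l ∂μ)]
        rw [← ENNReal.rpow_add_of_nonneg _ _ zero_le_one (by linarith), add_sub_cancel]

theorem lintegral_lintegral_mul_sub_mul_eq {φ H K : G → ℝ≥0∞} (hφ : Measurable φ)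
    (hH : Measurable H) (hK : Measurable K) :
    ∫⁻ l, ∫⁻ γ, H l * φ (γ - l) * K γ ∂μ ∂μ = ∫⁻ u, φ u * ∫⁻ l, H l * K (l + u) ∂μ ∂μ := by
  have htrans (l : G) :
      ∫⁻ γ, H l * φ (γ - l) * K γ ∂μ = ∫⁻ u, φ u * (H l * K (l + u)) ∂μ := by
    rw [← lintegral_add_left_eq_self _ l]
    refine lintegral_congr fun u => ?_
    rw [add_sub_cancel_left]; ring
  simp_rw [htrans]
  rw [lintegral_lintegral_swap (by fun_prop)]
  exact lintegral_congr fun u => lintegral_const_mul _ (by fun_prop)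

variable [MeasurableNeg G] [μ.IsNegInvariant]

theorem lintegral_rpow_lintegral_mul_add_le {P : ℝ} (hP : 1 ≤ P) {ρ w : G → ℝ≥0∞}
    (hρ : Measurable ρ) (hw : Measurable w) :
    ∫⁻ u, (∫⁻ l, ρ l * w (l + u) ∂μ) ^ P ∂μ ≤ (∫⁻ x, ρ x ^ P ∂μ) * (∫⁻ l, w l ∂μ) ^ P := by
  have htrans (u : G) : ∫⁻ l, ρ l * w (l + u) ∂μ = ∫⁻ m, ρ (m + -u) * w m ∂μ := by
    rw [← lintegral_add_right_eq_self (fun m => ρ (m + -u) * w m) u]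
    simp only [add_neg_cancel_right]
  simp_rw [htrans]
  exact (lintegral_neg_eq_self fun v => (∫⁻ m, ρ (m + v) * w m ∂μ) ^ P).trans_le
    (lintegral_rpow_lintegral_add_mul_le hP hρ hw)

theorem lintegral_rpow_lintegral_mul_mul_add_le {P : ℝ} (hP : 1 ≤ P) {a b S : G → ℝ≥0∞}
    (ha : Measurable a) (hb : Measurable b) (hS : Measurable S) :
    ∫⁻ u, (∫⁻ l, a l * S l * (S (l + u) * b (l + u)) ∂μ) ^ P ∂μ
      ≤ (∫⁻ x, (S x ^ 2) ^ P ∂μ) * ((∫⁻ l, a l ^ 2 ∂μ) * ∫⁻ l, b l ^ 2 ∂μ) ^ (P / 2) := by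
  have hP0 : 0 ≤ P := zero_le_one.trans hP
  have hCS (u : G) : ∫⁻ l, a l * S l * (S (l + u) * b (l + u)) ∂μ
      ≤ (∫⁻ l, S (l + u) ^ 2 * a l ^ 2 ∂μ) ^ (1 / 2 : ℝ)
        * (∫⁻ l, S l ^ 2 * b (l + u) ^ 2 ∂μ) ^ (1 / 2 : ℝ) := by
    calc ∫⁻ l, a l * S l * (S (l + u) * b (l + u)) ∂μ
        = ∫⁻ l, (a l * S (l + u)) * (S l * b (l + u)) ∂μ := by
          refine lintegral_congr fun l => ?_; ring
      _ ≤ _ := lintegral_mul_le_sqrt_mul_sqrt (by fun_prop) (by fun_prop)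
      _ = _ := by simp_rw [mul_pow, mul_comm (a _ ^ 2)]
  set R := ∫⁻ x, (S x ^ 2) ^ P ∂μ
  calc ∫⁻ u, (∫⁻ l, a l * S l * (S (l + u) * b (l + u)) ∂μ) ^ P ∂μ
      ≤ (∫⁻ u, (∫⁻ l, S (l + u) ^ 2 * a l ^ 2 ∂μ) ^ P ∂μ) ^ (1 / 2 : ℝ)
        * (∫⁻ u, (∫⁻ l, S l ^ 2 * b (l + u) ^ 2 ∂μ) ^ P ∂μ) ^ (1 / 2 : ℝ) :=
        lintegral_rpow_le_of_le_sqrt_mul_sqrt hP0 (by fun_prop) (by fun_prop) hCS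
    _ ≤ (R * (∫⁻ l, a l ^ 2 ∂μ) ^ P) ^ (1 / 2 : ℝ)
          * (R * (∫⁻ l, b l ^ 2 ∂μ) ^ P) ^ (1 / 2 : ℝ) := by
        gcongr
        · exact lintegral_rpow_lintegral_add_mul_le hP (by fun_prop) (by fun_prop)
        · exact lintegral_rpow_lintegral_mul_add_le hP (by fun_prop) (by fun_prop)
    _ = R * ((∫⁻ l, a l ^ 2 ∂μ) * ∫⁻ l, b l ^ 2 ∂μ) ^ (P / 2) := by
        rw [← ENNReal.mul_rpow_of_nonneg _ _ (by norm_num), mul_mul_mul_comm,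
          ← ENNReal.mul_rpow_of_nonneg _ _ hP0, ENNReal.mul_rpow_of_nonneg _ _ (by norm_num),
          ← ENNReal.rpow_mul, ← sq, ← ENNReal.rpow_natCast, ← ENNReal.rpow_mul]
        norm_num [mul_one_div]

theorem lintegral_lintegral_mul_sub_mul_le {p q : ℝ} (hpq : p.HolderConjugate q)
    {φ S a b : G → ℝ≥0∞} (hφ : Measurable φ) (hS : Measurable S) (ha : Measurable a)
    (hb : Measurable b) :
    ∫⁻ l, ∫⁻ γ, a l * S l * φ (γ - l) * S γ * b γ ∂μ ∂μ
      ≤ (∫⁻ x, φ x ^ q ∂μ) ^ (1 / q) * (∫⁻ x, (S x ^ 2) ^ p ∂μ) ^ (1 / p)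
        * (∫⁻ x, a x ^ 2 ∂μ) ^ (1 / 2 : ℝ) * (∫⁻ x, b x ^ 2 ∂μ) ^ (1 / 2 : ℝ) := by
  have hp0 := hpq.pos
  simp_rw [mul_assoc _ (S _) (b _)]
  rw [lintegral_lintegral_mul_sub_mul_eq (H := fun l => a l * S l) (K := fun γ => S γ * b γ)
    hφ (ha.mul hS) (hS.mul hb)]
  calc ∫⁻ u, φ u * ∫⁻ l, a l * S l * (S (l + u) * b (l + u)) ∂μ ∂μ
      ≤ (∫⁻ x, φ x ^ q ∂μ) ^ (1 / q)
        * (∫⁻ u, (∫⁻ l, a l * S l * (S (l + u) * b (l + u)) ∂μ) ^ p ∂μ) ^ (1 / p) :=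
        ENNReal.lintegral_mul_le_Lp_mul_Lq μ hpq.symm hφ.aemeasurable (by fun_prop)
    _ ≤ (∫⁻ x, φ x ^ q ∂μ) ^ (1 / q) * ((∫⁻ x, (S x ^ 2) ^ p ∂μ)
          * ((∫⁻ l, a l ^ 2 ∂μ) * ∫⁻ l, b l ^ 2 ∂μ) ^ (p / 2)) ^ (1 / p) := by
        gcongr
        exact lintegral_rpow_lintegral_mul_mul_add_le hpq.lt.le ha hb hS
    _ = _ := by
        rw [ENNReal.mul_rpow_of_nonneg _ _ (by positivity), ← ENNReal.rpow_mul,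
          ENNReal.mul_rpow_of_nonneg _ _ (by positivity)]
        field_simp
        ring

end Translation

-- `weightedConvOp μ Q f` is the operator `T`; `weightedConvIntegrand Q f h g` is the integrand
-- of `⟨h, T g⟩` as a function on `G × G`.
noncomputable def weightedConvOp {G : Type*} [MeasurableSpace G] [Sub G] (μ : Measure G)
    (Q f g : G → ℝ) (l : G) : ℝ :=
  Real.sqrt (Q l) * ∫ γ, f (γ - l) * Real.sqrt (Q γ) * g γ ∂μ

noncomputable def weightedConvIntegrand {G : Type*} [Sub G] (Q f h g : G → ℝ) (z : G × G) : ℝ :=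
  h z.1 * Real.sqrt (Q z.1) * f (z.2 - z.1) * Real.sqrt (Q z.2) * g z.2

theorem weightedConvIntegrand_swap {G : Type*} [AddGroup G] {Q f : G → ℝ}
    (hf : ∀ x, f (-x) = f x) (h g : G → ℝ) (z : G × G) :
    weightedConvIntegrand Q f g h z.swap = weightedConvIntegrand Q f h g z := by
  simp only [weightedConvIntegrand, Prod.fst_swap, Prod.snd_swap, ← neg_sub z.2, hf]
  ring

section WeightedConvOp
variable {G : Type*} [MeasurableSpace G] [AddGroup G] {μ : Measure G} {Q f : G → ℝ}

theorem integral_mul_weightedConvOp_congr_ae {h h' g g' : G → ℝ} (hh : h =ᵐ[μ] h')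
    (hg : g =ᵐ[μ] g') :
    ∫ l, h l * weightedConvOp μ Q f g l ∂μ = ∫ l, h' l * weightedConvOp μ Q f g' l ∂μ := by
  have hT : weightedConvOp μ Q f g = weightedConvOp μ Q f g' := by
    ext l
    exact congrArg _ (integral_congr_ae (hg.mono fun γ hγ => by simp only [hγ]))
  exact integral_congr_ae (hh.mono fun l hl => by simp only [hl, hT])

variable [SFinite μ]

theorem integral_mul_weightedConvOp_eq_integral_prod {h g : G → ℝ}
    (hK : Integrable (weightedConvIntegrand Q f h g) (μ.prod μ)) :
    ∫ l, h l * weightedConvOp μ Q f g l ∂μ = ∫ z, weightedConvIntegrand Q f h g z ∂(μ.prod μ) := by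
  rw [← integral_integral (f := fun l γ => weightedConvIntegrand Q f h g (l, γ)) hK]
  refine integral_congr_ae (ae_of_all _ fun l => ?_)
  simp only [weightedConvOp, weightedConvIntegrand, ← integral_const_mul]
  congr 1 with γ
  ring

theorem integral_mul_weightedConvOp_comm (hf : ∀ x, f (-x) = f x) {h g : G → ℝ}
    (hhg : Integrable (weightedConvIntegrand Q f h g) (μ.prod μ))
    (hgh : Integrable (weightedConvIntegrand Q f g h) (μ.prod μ)) :
    ∫ l, h l * weightedConvOp μ Q f g l ∂μ = ∫ l, g l * weightedConvOp μ Q f h l ∂μ := by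
  rw [integral_mul_weightedConvOp_eq_integral_prod hhg,
    integral_mul_weightedConvOp_eq_integral_prod hgh, ← integral_prod_swap]
  simp_rw [weightedConvIntegrand_swap hf]

end WeightedConvOp

section WeightedConvOpBound
variable {G : Type*} [MeasurableSpace G] [AddCommGroup G] [MeasurableAdd₂ G] [MeasurableNeg G]
  {μ : Measure G} [SFinite μ] [μ.IsAddLeftInvariant] [μ.IsNegInvariant] {Q f : G → ℝ}

theorem lintegral_enorm_weightedConvIntegrand_le {p q : ℝ} (hpq : p.HolderConjugate q)
    (hQ : Measurable Q) (hf : Measurable f) {h g : G → ℝ} (hh : Measurable h)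
    (hg : Measurable g) :
    ∫⁻ z, ‖weightedConvIntegrand Q f h g z‖ₑ ∂(μ.prod μ)
      ≤ (∫⁻ x, ‖f x‖ₑ ^ q ∂μ) ^ (1 / q) * (∫⁻ x, (‖Real.sqrt (Q x)‖ₑ ^ 2) ^ p ∂μ) ^ (1 / p)
        * (∫⁻ x, ‖h x‖ₑ ^ 2 ∂μ) ^ (1 / 2 : ℝ) * (∫⁻ x, ‖g x‖ₑ ^ 2 ∂μ) ^ (1 / 2 : ℝ) := by
  rw [lintegral_prod _ (by unfold weightedConvIntegrand; fun_prop)]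
  simp only [weightedConvIntegrand, enorm_mul]
  exact lintegral_lintegral_mul_sub_mul_le hpq (by fun_prop) (by fun_prop) (by fun_prop)
    (by fun_prop)

theorem integrable_weightedConvIntegrand_and_integral_le {p : ℕ} {q : ℝ}
    (hpq : (p : ℝ).HolderConjugate q) (hQm : Measurable Q) (hQ0 : ∀ x, 0 ≤ Q x)
    (hQp : Integrable (fun x => Q x ^ p) μ) (hfm : Measurable f) (hf0 : ∀ x, 0 ≤ f x)
    (hfq : Integrable (fun x => f x ^ q) μ) {h g : G → ℝ} (hhm : Measurable h)
    (hh : MemLp h 2 μ) (hgm : Measurable g) (hg : MemLp g 2 μ) :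
    Integrable (weightedConvIntegrand Q f h g) (μ.prod μ) ∧
      ∫ z, weightedConvIntegrand Q f h g z ∂(μ.prod μ)
        ≤ (∫ x, f x ^ q ∂μ) ^ (1 / q) * (∫ x, Q x ^ p ∂μ) ^ (1 / (p : ℝ))
          * (∫ x, h x ^ 2 ∂μ) ^ (1 / 2 : ℝ) * (∫ x, g x ^ 2 ∂μ) ^ (1 / 2 : ℝ) := by
  have hQ : ∫⁻ x, (‖Real.sqrt (Q x)‖ₑ ^ 2) ^ (p : ℝ) ∂μ = ENNReal.ofReal (∫ x, Q x ^ p ∂μ) := by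
    simp_rw [ENNReal.rpow_natCast, ← enorm_pow, Real.sq_sqrt (hQ0 _)]
    exact lintegral_enorm_eq_ofReal_integral hQp fun x => pow_nonneg (hQ0 x) p
  have hfq0 : 0 ≤ ∫ x, f x ^ q ∂μ := integral_nonneg fun x => Real.rpow_nonneg (hf0 x) q
  have hQp0 : 0 ≤ ∫ x, Q x ^ p ∂μ := integral_nonneg fun x => pow_nonneg (hQ0 x) p
  have hq0 := hpq.symm.nonneg
  set B := (∫ x, f x ^ q ∂μ) ^ (1 / q) * (∫ x, Q x ^ p ∂μ) ^ (1 / (p : ℝ))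
    * (∫ x, h x ^ 2 ∂μ) ^ (1 / 2 : ℝ) * (∫ x, g x ^ 2 ∂μ) ^ (1 / 2 : ℝ) with hB
  have hK : ∫⁻ z, ‖weightedConvIntegrand Q f h g z‖ₑ ∂(μ.prod μ) ≤ ENNReal.ofReal B := by
    refine (lintegral_enorm_weightedConvIntegrand_le hpq hQm hfm hhm hgm).trans_eq ?_
    rw [lintegral_enorm_rpow_eq_ofReal_integral hf0 hq0 hfq, hQ,
      lintegral_enorm_sq_eq_ofReal_integral hh, lintegral_enorm_sq_eq_ofReal_integral hg, hB,
      ENNReal.ofReal_mul, ENNReal.ofReal_mul, ENNReal.ofReal_mul, ENNReal.ofReal_rpow_of_nonneg,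
      ENNReal.ofReal_rpow_of_nonneg, ENNReal.ofReal_rpow_of_nonneg, ENNReal.ofReal_rpow_of_nonneg]
    all_goals positivity
  exact ⟨⟨by unfold weightedConvIntegrand; fun_prop, hK.trans_lt ENNReal.ofReal_lt_top⟩,
    integral_le_of_lintegral_enorm_le (by positivity) hK⟩

theorem integral_mul_weightedConvOp_le_and_comm {p : ℕ} {q : ℝ}
    (hpq : (p : ℝ).HolderConjugate q) (hQm : Measurable Q) (hQ0 : ∀ x, 0 ≤ Q x)
    (hQp : Integrable (fun x => Q x ^ p) μ) (hfm : Measurable f) (hf0 : ∀ x, 0 ≤ f x)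
    (hfe : ∀ x, f (-x) = f x) (hfq : Integrable (fun x => f x ^ q) μ) {h g : G → ℝ}
    (hh : MemLp h 2 μ) (hg : MemLp g 2 μ) :
    ∫ l, h l * weightedConvOp μ Q f g l ∂μ
        ≤ (∫ x, f x ^ q ∂μ) ^ (1 / q) * (∫ x, Q x ^ p ∂μ) ^ (1 / (p : ℝ))
          * (∫ x, h x ^ 2 ∂μ) ^ (1 / 2 : ℝ) * (∫ x, g x ^ 2 ∂μ) ^ (1 / 2 : ℝ) ∧
      ∫ l, h l * weightedConvOp μ Q f g l ∂μ = ∫ l, g l * weightedConvOp μ Q f h l ∂μ := by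
  obtain ⟨h', hh'm, hhh'⟩ := hh.aestronglyMeasurable.aemeasurable
  obtain ⟨g', hg'm, hgg'⟩ := hg.aestronglyMeasurable.aemeasurable
  have hsq {u v : G → ℝ} (huv : u =ᵐ[μ] v) : ∫ x, u x ^ 2 ∂μ = ∫ x, v x ^ 2 ∂μ :=
    integral_congr_ae (huv.mono fun x hx => by simp only [hx])
  rw [integral_mul_weightedConvOp_congr_ae hhh' hgg',
    integral_mul_weightedConvOp_congr_ae hgg' hhh', hsq hhh', hsq hgg']
  obtain ⟨hint, hle⟩ := integrable_weightedConvIntegrand_and_integral_le hpq hQm hQ0 hQp hfm hf0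
    hfq hh'm (hh.ae_eq hhh') hg'm (hg.ae_eq hgg')
  obtain ⟨hint', -⟩ := integrable_weightedConvIntegrand_and_integral_le hpq hQm hQ0 hQp hfm hf0
    hfq hg'm (hg.ae_eq hgg') hh'm (hh.ae_eq hhh')
  exact ⟨(integral_mul_weightedConvOp_eq_integral_prod hint).trans_le hle,
    integral_mul_weightedConvOp_comm hfe hint hint'⟩

end WeightedConvOpBound

theorem integral_one_euclideanSpace {d : ℕ} (hd : 0 < d) :
    ∫ _ : EuclideanSpace ℝ (Fin d), (1 : ℝ) = 0 := by
  have : Nonempty (Fin d) := ⟨⟨0, hd⟩⟩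
  simp [measureReal_def, measure_univ_of_isAddLeftInvariant]

theorem stmt6 (d p : ℕ) (hd : 0 < d) (hp : 1 ≤ p) (q : ℝ) (hq : 1 / (p : ℝ) + 1 / q = 1)
    (Q : EuclideanSpace ℝ (Fin d) → ℝ) (hQm : Measurable Q)
    (hQ01 : ∀ l, Q l ∈ Set.Icc (0 : ℝ) 1)
    (hQp : Integrable fun l => Q l ^ p)
    (f : EuclideanSpace ℝ (Fin d) → ℝ) (hf0 : ∀ l, 0 ≤ f l) (hfc : Continuous f)
    (hfe : ∀ l, f (-l) = f l) (hfq : (∫ l, f l ^ q) = 1)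
    (g h : EuclideanSpace ℝ (Fin d) → ℝ) (hg : MemLp g 2) (hh : MemLp h 2) :
    (∫ l, h l * (Real.sqrt (Q l) * ∫ γ, f (γ - l) * Real.sqrt (Q γ) * g γ))
        ≤ (∫ l, Q l ^ p) ^ (1 / (p : ℝ)) * (∫ l, g l ^ 2) ^ (1 / 2 : ℝ) *
            (∫ l, h l ^ 2) ^ (1 / 2 : ℝ)
      ∧ (∫ l, h l * (Real.sqrt (Q l) * ∫ γ, f (γ - l) * Real.sqrt (Q γ) * g γ))
        = ∫ l, g l * (Real.sqrt (Q l) * ∫ γ, f (γ - l) * Real.sqrt (Q γ) * h γ) := by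
  -- For p = 1 the hypothesis forces 1 / q = 0, i.e. q = 0, and then ∫ f ^ q = ∫ 1 = 0.
  have hp1 : 1 < p := by
    refine lt_of_le_of_ne hp fun hp1 => ?_
    have hq0 : q = 0 := by simpa [← hp1] using hq
    simp [hq0, integral_one_euclideanSpace hd] at hfq
  have hpq : (p : ℝ).HolderConjugate q :=
    Real.holderConjugate_iff.2 ⟨by exact_mod_cast hp1, by simpa [one_div] using hq⟩
  obtain ⟨hle, hcomm⟩ := integral_mul_weightedConvOp_le_and_comm hpq hQm (fun l => (hQ01 l).1)
    hQp hfc.measurable hf0 hfe (.of_integral_ne_zero (by simp [hfq])) hh hg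
  rw [hfq, Real.one_rpow, one_mul] at hle
  exact ⟨hle.trans_eq (by ring), hcomm⟩
end

section
/- Let Q : ℝ^d → [0,∞) be measurable with ∫ Q^p < ∞, let p ≥ 1 be an integer, and define Q_M(λ) = Q((2π/M)⌊(M/2π)λ⌋) (componentwise floor). If Q is uniformly continuous and Q_M → Q uniformly on ℝ^d as M → ∞, then limsup_{M→∞} sup_{‖g‖₂=1} ∫_{|λ|≤a} [∫_{ℝ^d} √(Q_M(λ+γ))√(Q_M(γ)) g(λ+γ)g(γ) dγ]^p dλ ≤ sup_{‖g‖₂=1} ∫_{|λ|≤a} [∫_{ℝ^d} √(Q(λ+γ))√(Q(γ)) g(λ+γ)g(γ) dγ]^p dλ, for every fixed a > 0. -/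
open MeasureTheory Real Filter

/-!
A uniformly continuous `Q` with `∫ Q ^ p < ∞` is bounded, say by `B`, and then so is every `Q_M`,
whose values are values of `Q`. For `‖g‖₂ = 1` the AM-GM bound `∫ |g (λ + γ) g γ| dγ ≤ 1` shows that
the inner integrals are bounded by `B`, and, through `|√x - √y| ≤ √|x - y|`, that they move by at
most `2 √B √ε` when `Q` is replaced by `Q_M` with `|Q_M - Q| ≤ ε`. Since `|u ^ p - v ^ p| ≤
p B ^ (p - 1) |u - v|` on `[-B, B]` and the ball `‖λ‖ ≤ a` has finite volume, the `Q_M`-functional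
exceeds the `Q`-functional by `O(√ε)` uniformly in `g`; pass to suprema and then to the limsup.
-/

-- No sign conditions are needed: `√x = 0` for `x ≤ 0`.
theorem Real.sqrt_add_le_sqrt_add_sqrt (x y : ℝ) : √(x + y) ≤ √x + √y := by
  rw [Real.sqrt_le_left (by positivity), add_sq, Real.sq_sqrt', Real.sq_sqrt']
  nlinarith [le_max_left x 0, le_max_left y 0, Real.sqrt_nonneg x, Real.sqrt_nonneg y,
    mul_nonneg (Real.sqrt_nonneg x) (Real.sqrt_nonneg y)]

theorem Real.abs_sqrt_sub_sqrt_le (x y : ℝ) : |√x - √y| ≤ √|x - y| := by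
  have key : ∀ x y : ℝ, √x - √y ≤ √|x - y| := fun x y => by
    have : √x ≤ √(|x - y| + y) := Real.sqrt_le_sqrt (by linarith [le_abs_self (x - y)])
    linarith [Real.sqrt_add_le_sqrt_add_sqrt |x - y| y]
  exact abs_sub_le_iff.2 ⟨key x y, abs_sub_comm x y ▸ key y x⟩

theorem Real.abs_sqrt_mul_sqrt_le {a b B : ℝ} (ha : a ≤ B) (hb : b ≤ B) (hB : 0 ≤ B) :
    |√a * √b| ≤ B := by
  rw [abs_of_nonneg (by positivity), ← Real.mul_self_sqrt hB]
  exact mul_le_mul (Real.sqrt_le_sqrt ha) (Real.sqrt_le_sqrt hb) (by positivity) (by positivity)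

theorem Real.abs_sqrt_mul_sqrt_sub_sqrt_mul_sqrt_le {a b c e B ε : ℝ} (ha : a ≤ B) (he : e ≤ B)
    (hac : |a - c| ≤ ε) (hbe : |b - e| ≤ ε) :
    |√a * √b - √c * √e| ≤ 2 * √B * √ε := by
  have hsa : √a ≤ √B := Real.sqrt_le_sqrt ha
  have hse : √e ≤ √B := Real.sqrt_le_sqrt he
  have hac' : |√a - √c| ≤ √ε := (Real.abs_sqrt_sub_sqrt_le a c).trans (Real.sqrt_le_sqrt hac)
  have hbe' : |√b - √e| ≤ √ε := (Real.abs_sqrt_sub_sqrt_le b e).trans (Real.sqrt_le_sqrt hbe)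
  calc |√a * √b - √c * √e| = |√a * (√b - √e) + (√a - √c) * √e| := by ring_nf
    _ ≤ √a * |√b - √e| + |√a - √c| * √e := by
        grw [abs_add_le, abs_mul, abs_mul, abs_of_nonneg (Real.sqrt_nonneg a),
          abs_of_nonneg (Real.sqrt_nonneg e)]
    _ ≤ √B * √ε + √ε * √B := by gcongr
    _ = 2 * √B * √ε := by ring

theorem UniformContinuous.bddAbove_range_of_integrable_pow {E : Type*} [NormedAddCommGroup E]
    [MeasurableSpace E] [BorelSpace E] [ProperSpace E] {μ : Measure E} [μ.IsAddHaarMeasure]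
    {f : E → ℝ} {p : ℕ} (hf : UniformContinuous f) (hint : Integrable (fun x => f x ^ p) μ)
    (hp : 1 ≤ p) : BddAbove (Set.range f) := by
  obtain ⟨δ, hδ, hfδ⟩ := Metric.uniformContinuous_iff.mp hf 1 one_pos
  set v := μ.real (Metric.ball 0 δ)
  have hv : 0 < v := ENNReal.toReal_pos (Metric.measure_ball_pos μ 0 hδ).ne' measure_ball_lt_top.ne
  set I := ∫ x, ‖f x ^ p‖ ∂μ
  refine ⟨max 2 (1 + I / v), Set.forall_mem_range.2 fun x => ?_⟩
  rcases le_or_gt (f x) 2 with hx | hx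
  · exact le_max_of_le_left hx
  refine le_max_of_le_right ?_
  have hball : ∀ y ∈ Metric.ball x δ, f x - 1 ≤ ‖f y ^ p‖ := fun y hy => by
    have hxy : f x - 1 < f y := by
      linarith [(abs_lt.mp (Real.dist_eq _ _ ▸ hfδ (Metric.mem_ball'.mp hy))).2]
    calc f x - 1 ≤ f y := hxy.le
      _ ≤ f y ^ p := le_self_pow₀ (by linarith) (by omega)
      _ ≤ ‖f y ^ p‖ := le_norm_self _
  have hvI : (f x - 1) * v ≤ I :=
    calc (f x - 1) * v = ∫ y in Metric.ball x δ, (f x - 1) ∂μ := by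
          rw [setIntegral_const, smul_eq_mul, mul_comm, Measure.addHaar_real_ball_center]
      _ ≤ ∫ y in Metric.ball x δ, ‖f y ^ p‖ ∂μ :=
          setIntegral_mono_on (integrableOn_const measure_ball_lt_top.ne) hint.norm.integrableOn
            measurableSet_ball hball
      _ ≤ I := setIntegral_le_integral hint.norm (ae_of_all _ fun y => norm_nonneg _)
  linarith [(le_div_iff₀ hv).2 hvI]

theorem setIntegral_pow_le_add_of_abs_sub_le {α : Type*} [MeasurableSpace α] {μ : Measure α}
    {s : Set α} {F H : α → ℝ} {B η : ℝ} (p : ℕ) (hs : μ s < ⊤) (hF : AEStronglyMeasurable F μ)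
    (hH : AEStronglyMeasurable H μ) (hFB : ∀ x, |F x| ≤ B) (hHB : ∀ x, |H x| ≤ B)
    (hFH : ∀ x, |F x - H x| ≤ η) :
    ∫ x in s, F x ^ p ∂μ ≤ ∫ x in s, H x ^ p ∂μ + μ.real s * (η * p * B ^ (p - 1)) := by
  have hpow_int : ∀ {T : α → ℝ}, AEStronglyMeasurable T μ → (∀ x, |T x| ≤ B) →
      IntegrableOn (fun x => T x ^ p) s μ := fun hT hTB =>
    Measure.integrableOn_of_bounded hs.ne (hT.pow p) (M := B ^ p) (ae_of_all _ fun x => by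
      rw [norm_pow, Real.norm_eq_abs]
      exact pow_le_pow_left₀ (abs_nonneg _) (hTB x) p)
  have hpointwise : ∀ x, F x ^ p ≤ H x ^ p + η * p * B ^ (p - 1) := fun x => by
    have hη : 0 ≤ η := (abs_nonneg _).trans (hFH x)
    have := calc |F x ^ p - H x ^ p| ≤ |F x - H x| * p * max |F x| |H x| ^ (p - 1) :=
          abs_pow_sub_pow_le _ _ _
      _ ≤ η * p * B ^ (p - 1) := by gcongr; exacts [hFH x, max_le (hFB x) (hHB x)]
    linarith [le_abs_self (F x ^ p - H x ^ p)]
  calc ∫ x in s, F x ^ p ∂μ ≤ ∫ x in s, (H x ^ p + η * p * B ^ (p - 1)) ∂μ :=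
        setIntegral_mono (hpow_int hF hFB) ((hpow_int hH hHB).add (integrableOn_const hs.ne))
          hpointwise
    _ = ∫ x in s, H x ^ p ∂μ + μ.real s * (η * p * B ^ (p - 1)) := by
        rw [integral_add (hpow_int hH hHB) (integrableOn_const hs.ne), setIntegral_const,
          smul_eq_mul]

theorem limsup_iSup_le_iSup_of_eventually_le {α ι : Type*} {l : Filter α} [l.NeBot]
    {F : α → ι → ℝ} {f : ι → ℝ} {C : ℝ} (hF : ∀ M i, |F M i| ≤ C) (hf : BddAbove (Set.range f))
    (hFf : ∀ ε > 0, ∀ᶠ M in l, ∀ i, F M i ≤ f i + ε) :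
    limsup (fun M => ⨆ i, F M i) l ≤ ⨆ i, f i := by
  rcases isEmpty_or_nonempty ι with hι | hι
  · simp [Real.iSup_of_isEmpty]
  obtain ⟨i₀⟩ := id hι
  have hF_bdd : ∀ M, BddAbove (Set.range (F M)) := fun M =>
    ⟨C, Set.forall_mem_range.2 fun i => (le_abs_self _).trans (hF M i)⟩
  have hlower : ∀ M, -C ≤ ⨆ i, F M i := fun M =>
    (neg_le_of_abs_le (hF M i₀)).trans (le_ciSup (hF_bdd M) i₀)
  refine le_of_forall_pos_le_add fun ε hε =>
    limsup_le_of_le (isCoboundedUnder_le_of_le l hlower) ?_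
  filter_upwards [hFf ε hε] with M hM
  exact ciSup_le fun i => (hM i).trans (by gcongr; exact le_ciSup hf i)

noncomputable def weightedAutocorr {G : Type*} [Add G] [MeasurableSpace G] (μ : Measure G)
    (R g : G → ℝ) (l : G) : ℝ :=
  ∫ γ, √(R (l + γ)) * √(R γ) * g (l + γ) * g γ ∂μ

section Autocorrelation

variable {G : Type*} [AddGroup G] [MeasurableSpace G] [MeasurableAdd₂ G] {μ : Measure G}
  [μ.IsAddLeftInvariant] {g : G → ℝ}

theorem integrable_mul_translate (hg : MemLp g 2 μ) (l : G) :
    Integrable (fun γ => g (l + γ) * g γ) μ :=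
  (hg.comp_measurePreserving (measurePreserving_add_left μ l)).integrable_mul hg

theorem integral_abs_mul_translate_le (hg : MemLp g 2 μ) (l : G) :
    ∫ γ, |g (l + γ) * g γ| ∂μ ≤ ∫ γ, g γ ^ 2 ∂μ := by
  have hsq : Integrable (fun γ => g γ ^ 2) μ := hg.integrable_sq
  have hsq_translate : Integrable (fun γ => g (l + γ) ^ 2) μ :=
    (hg.comp_measurePreserving (measurePreserving_add_left μ l)).integrable_sq
  calc ∫ γ, |g (l + γ) * g γ| ∂μ ≤ ∫ γ, (g (l + γ) ^ 2 + g γ ^ 2) / 2 ∂μ := by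
        refine integral_mono_of_nonneg (ae_of_all _ fun γ => abs_nonneg _)
          ((hsq_translate.add hsq).div_const 2) (ae_of_all _ fun γ => ?_)
        dsimp only
        rw [abs_mul]
        nlinarith [sq_nonneg (|g (l + γ)| - |g γ|), sq_abs (g (l + γ)), sq_abs (g γ)]
    _ = ∫ γ, g γ ^ 2 ∂μ := by
        rw [integral_div, integral_add hsq_translate hsq,
          integral_add_left_eq_self (fun γ => g γ ^ 2) l]
        ring

theorem integrable_mul_mul_translate {w : G → ℝ} {K : ℝ} (hw : AEStronglyMeasurable w μ)
    (hwK : ∀ γ, |w γ| ≤ K) (hg : MemLp g 2 μ) (l : G) :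
    Integrable (fun γ => w γ * g (l + γ) * g γ) μ := by
  simpa only [mul_assoc] using (integrable_mul_translate hg l).bdd_mul hw (ae_of_all _ hwK)

theorem abs_integral_mul_mul_translate_le {w : G → ℝ} {K : ℝ} (hwK : ∀ γ, |w γ| ≤ K)
    (hg : MemLp g 2 μ) (l : G) :
    |∫ γ, w γ * g (l + γ) * g γ ∂μ| ≤ K * ∫ γ, g γ ^ 2 ∂μ := by
  have hK : 0 ≤ K := (abs_nonneg _).trans (hwK 0)
  calc |∫ γ, w γ * g (l + γ) * g γ ∂μ| ≤ ∫ γ, |w γ * g (l + γ) * g γ| ∂μ :=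
        abs_integral_le_integral_abs
    _ ≤ ∫ γ, K * |g (l + γ) * g γ| ∂μ := by
        refine integral_mono_of_nonneg (ae_of_all _ fun γ => abs_nonneg _)
          ((integrable_mul_translate hg l).abs.const_mul K) (ae_of_all _ fun γ => ?_)
        dsimp only
        rw [mul_assoc, abs_mul]
        exact mul_le_mul_of_nonneg_right (hwK γ) (abs_nonneg _)
    _ ≤ K * ∫ γ, g γ ^ 2 ∂μ := by
        rw [integral_const_mul]
        exact mul_le_mul_of_nonneg_left (integral_abs_mul_translate_le hg l) hK

variable {R S : G → ℝ} {B ε : ℝ}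

theorem abs_weightedAutocorr_le (hB : 0 ≤ B) (hRB : ∀ x, R x ≤ B) (hg : MemLp g 2 μ) (l : G) :
    |weightedAutocorr μ R g l| ≤ B * ∫ γ, g γ ^ 2 ∂μ :=
  abs_integral_mul_mul_translate_le (fun _ => Real.abs_sqrt_mul_sqrt_le (hRB _) (hRB _) hB) hg l

theorem aestronglyMeasurable_sqrt_mul_sqrt_translate (hR : AEStronglyMeasurable R μ) (l : G) :
    AEStronglyMeasurable (fun γ => √(R (l + γ)) * √(R γ)) μ :=
  (continuous_sqrt.comp_aestronglyMeasurable
    (hR.comp_measurePreserving (measurePreserving_add_left μ l))).mul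
    (continuous_sqrt.comp_aestronglyMeasurable hR)

theorem abs_weightedAutocorr_sub_le (hR : AEStronglyMeasurable R μ)
    (hS : AEStronglyMeasurable S μ) (hB : 0 ≤ B) (hRB : ∀ x, R x ≤ B) (hSB : ∀ x, S x ≤ B)
    (hRS : ∀ x, |R x - S x| ≤ ε) (hg : MemLp g 2 μ) (l : G) :
    |weightedAutocorr μ R g l - weightedAutocorr μ S g l| ≤ 2 * √B * √ε * ∫ γ, g γ ^ 2 ∂μ := by
  have hint : ∀ {T : G → ℝ}, AEStronglyMeasurable T μ → (∀ x, T x ≤ B) →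
      Integrable (fun γ => √(T (l + γ)) * √(T γ) * g (l + γ) * g γ) μ := fun hT hTB =>
    integrable_mul_mul_translate (aestronglyMeasurable_sqrt_mul_sqrt_translate hT l)
      (fun _ => Real.abs_sqrt_mul_sqrt_le (hTB _) (hTB _) hB) hg l
  rw [weightedAutocorr, weightedAutocorr, ← integral_sub (hint hR hRB) (hint hS hSB)]
  simp only [← sub_mul]
  exact abs_integral_mul_mul_translate_le
    (fun _ => Real.abs_sqrt_mul_sqrt_sub_sqrt_mul_sqrt_le (hRB _) (hSB _) (hRS _) (hRS _)) hg l


theorem aestronglyMeasurable_weightedAutocorr [SFinite μ] (hR : AEStronglyMeasurable R μ)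
    (hg : AEStronglyMeasurable g μ) : AEStronglyMeasurable (weightedAutocorr μ R g) μ := by
  have hadd := quasiMeasurePreserving_add μ μ
  have hsnd : Measure.QuasiMeasurePreserving Prod.snd (μ.prod μ) μ :=
    Measure.quasiMeasurePreserving_snd
  exact AEStronglyMeasurable.integral_prod_right'
    (f := fun q : G × G => √(R (q.1 + q.2)) * √(R q.2) * g (q.1 + q.2) * g q.2)
    ((((continuous_sqrt.comp_aestronglyMeasurable (hR.comp_quasiMeasurePreserving hadd)).mul
      (continuous_sqrt.comp_aestronglyMeasurable (hR.comp_quasiMeasurePreserving hsnd))).mul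
      (hg.comp_quasiMeasurePreserving hadd)).mul (hg.comp_quasiMeasurePreserving hsnd))

variable {s : Set G} (p : ℕ)

theorem abs_setIntegral_pow_weightedAutocorr_le (hs : μ s < ⊤) (hB : 0 ≤ B)
    (hRB : ∀ x, R x ≤ B) (hg : MemLp g 2 μ) (hg1 : ∫ γ, g γ ^ 2 ∂μ = 1) :
    |∫ l in s, weightedAutocorr μ R g l ^ p ∂μ| ≤ B ^ p * μ.real s := by
  rw [← Real.norm_eq_abs]
  refine norm_setIntegral_le_of_norm_le_const hs fun l _ => ?_
  rw [norm_pow, Real.norm_eq_abs]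
  exact pow_le_pow_left₀ (abs_nonneg _) (by simpa [hg1] using abs_weightedAutocorr_le hB hRB hg l) p

theorem setIntegral_pow_weightedAutocorr_le_add [SFinite μ] (hs : μ s < ⊤)
    (hR : AEStronglyMeasurable R μ) (hS : AEStronglyMeasurable S μ) (hB : 0 ≤ B)
    (hRB : ∀ x, R x ≤ B) (hSB : ∀ x, S x ≤ B) (hRS : ∀ x, |R x - S x| ≤ ε) (hg : MemLp g 2 μ)
    (hg1 : ∫ γ, g γ ^ 2 ∂μ = 1) :
    ∫ l in s, weightedAutocorr μ R g l ^ p ∂μ ≤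
      ∫ l in s, weightedAutocorr μ S g l ^ p ∂μ + μ.real s * (2 * √B * √ε * p * B ^ (p - 1)) :=
  setIntegral_pow_le_add_of_abs_sub_le p hs
    (aestronglyMeasurable_weightedAutocorr hR hg.1) (aestronglyMeasurable_weightedAutocorr hS hg.1)
    (fun l => by simpa [hg1] using abs_weightedAutocorr_le hB hRB hg l)
    (fun l => by simpa [hg1] using abs_weightedAutocorr_le hB hSB hg l)
    (fun l => by simpa [hg1] using abs_weightedAutocorr_sub_le hR hS hB hRB hSB hRS hg l)

end Autocorrelation


theorem stmt15_general (d p : ℕ) (hp : 1 ≤ p) (a : ℝ)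
    (Q : EuclideanSpace ℝ (Fin d) → ℝ)
    (hQint : Integrable fun l => Q l ^ p) (hQuc : UniformContinuous Q)
    (QM : ℝ → EuclideanSpace ℝ (Fin d) → ℝ)
    (hQM : ∀ (M : ℝ) (l : EuclideanSpace ℝ (Fin d)),
      QM M l = Q (WithLp.toLp 2 (fun i => (2 * π / M) * (⌊(M / (2 * π)) * l i⌋ : ℝ))))
    (hconv : TendstoUniformly QM Q atTop) :
    Filter.limsup (fun M : ℝ =>
        ⨆ g : {g : EuclideanSpace ℝ (Fin d) → ℝ // MemLp g 2 ∧ (∫ x, g x ^ 2) = 1},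
          ∫ l in {l : EuclideanSpace ℝ (Fin d) | ‖l‖ ≤ a},
            (∫ γ, Real.sqrt (QM M (l + γ)) * Real.sqrt (QM M γ) * g.1 (l + γ) * g.1 γ) ^ p)
        atTop
      ≤ ⨆ g : {g : EuclideanSpace ℝ (Fin d) → ℝ // MemLp g 2 ∧ (∫ x, g x ^ 2) = 1},
          ∫ l in {l : EuclideanSpace ℝ (Fin d) | ‖l‖ ≤ a},
            (∫ γ, Real.sqrt (Q (l + γ)) * Real.sqrt (Q γ) * g.1 (l + γ) * g.1 γ) ^ p := by
  obtain ⟨B₀, hB₀⟩ := hQuc.bddAbove_range_of_integrable_pow hQint hp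
  set B := max B₀ 0
  have hB : 0 ≤ B := le_max_right _ _
  have hQB : ∀ x, Q x ≤ B := fun x => (hB₀ ⟨x, rfl⟩).trans (le_max_left _ _)
  have hQMB : ∀ M x, QM M x ≤ B := fun M x => hQM M x ▸ hQB _
  have hQm : AEStronglyMeasurable Q := hQuc.continuous.aestronglyMeasurable
  have hQMm : ∀ M, AEStronglyMeasurable (QM M) := fun M => by
    rw [funext (hQM M)]
    exact (hQuc.continuous.measurable.comp (by fun_prop)).aestronglyMeasurable
  set s := {l : EuclideanSpace ℝ (Fin d) | ‖l‖ ≤ a}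
  have hs : volume s < ⊤ := by
    simpa [s, Metric.closedBall, dist_zero_right] using
      measure_closedBall_lt_top (μ := volume) (x := (0 : EuclideanSpace ℝ (Fin d))) (r := a)
  refine limsup_iSup_le_iSup_of_eventually_le
    (fun M g => abs_setIntegral_pow_weightedAutocorr_le p hs hB (hQMB M) g.2.1 g.2.2)
    ⟨_, Set.forall_mem_range.2 fun g => (le_abs_self _).trans
      (abs_setIntegral_pow_weightedAutocorr_le p hs hB hQB g.2.1 g.2.2)⟩ fun ε hε => ?_
  obtain ⟨c, hc, hcε⟩ := exists_pos_mul_lt hε (volume.real s * (2 * √B * p * B ^ (p - 1)))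
  filter_upwards [Metric.tendstoUniformly_iff.mp hconv (c ^ 2) (by positivity)] with M hM g
  have hclose : ∀ x, |QM M x - Q x| ≤ c ^ 2 := fun x => by
    rw [← Real.dist_eq, dist_comm]; exact (hM x).le
  refine (setIntegral_pow_weightedAutocorr_le_add p hs (hQMm M) hQm hB (hQMB M) hQB hclose
    g.2.1 g.2.2).trans ?_
  rw [Real.sqrt_sq hc.le]
  refine add_le_add le_rfl ?_
  linarith [show volume.real s * (2 * √B * c * p * B ^ (p - 1)) =
    volume.real s * (2 * √B * p * B ^ (p - 1)) * c by ring]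

theorem stmt15 (d p : ℕ) (hd : 0 < d) (hp : 1 ≤ p) (a : ℝ) (ha : 0 < a)
    (Q : EuclideanSpace ℝ (Fin d) → ℝ) (hQ0 : ∀ l, 0 ≤ Q l)
    (hQint : Integrable fun l => Q l ^ p) (hQuc : UniformContinuous Q)
    (QM : ℝ → EuclideanSpace ℝ (Fin d) → ℝ)
    (hQM : ∀ (M : ℝ) (l : EuclideanSpace ℝ (Fin d)),
      QM M l = Q (WithLp.toLp 2 (fun i => (2 * π / M) * (⌊(M / (2 * π)) * l i⌋ : ℝ))))
    (hconv : TendstoUniformly QM Q atTop) :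
    Filter.limsup (fun M : ℝ =>
        ⨆ g : {g : EuclideanSpace ℝ (Fin d) → ℝ // MemLp g 2 ∧ (∫ x, g x ^ 2) = 1},
          ∫ l in {l : EuclideanSpace ℝ (Fin d) | ‖l‖ ≤ a},
            (∫ γ, Real.sqrt (QM M (l + γ)) * Real.sqrt (QM M γ) * g.1 (l + γ) * g.1 γ) ^ p)
        atTop
      ≤ ⨆ g : {g : EuclideanSpace ℝ (Fin d) → ℝ // MemLp g 2 ∧ (∫ x, g x ^ 2) = 1},
          ∫ l in {l : EuclideanSpace ℝ (Fin d) | ‖l‖ ≤ a},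
            (∫ γ, Real.sqrt (Q (l + γ)) * Real.sqrt (Q γ) * g.1 (l + γ) * g.1 γ) ^ p :=
  stmt15_general d p hp a Q hQint hQuc QM hQM hconv
end
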